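/- arXiv:1909.05418 — 2 statements merged into one kernel-verified Lean document; each statement's English description precedes it below -/
import Mathlib

section
/- Strictness of m-d-separation versus d-separation: Consider the mother graph M consisting of the two sub-DAGs over Z = {X_i, X_j, X_k, T} given by G_1 with edge set {X_i → X_j, T → X_j} and G_2 with edge set {X_k → X_j, T → X_j}. Then {X_i} and {X_k} are d-separated given {X_j} in M ({X_i} ⊥_d {X_k} | {X_j}), but {X_i} and {X_k} are NOT m-d-separated given {X_j} in M ({X_i} ⊥̸_md {X_k} | {X_j}, witnessed by the single triple ⟨X_i, X_j, X_k⟩ in which X_j is an m-collider lying in the conditioning set). In particular, the converse of the implication 'm-d-separation implies d-separation' fails. -/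
/-! Basic directed/undirected graph notions. -/

section Graphs

variable {V : Type*}

/-- `v` is a collider on the path (vertex list) `vs` for the directed edge relation `E`:
the path contains `u → v ← w`. -/
def IsColliderOn (E : V → V → Prop) (vs : List V) (v : V) : Prop :=
  ∃ u w, [u, v, w] <:+: vs ∧ E u v ∧ E w v

/-- `v` is an interior (non-endpoint) vertex of the path `vs`. -/
def IsInteriorOn (vs : List V) (v : V) : Prop :=
  ∃ u w, [u, v, w] <:+: vs

/-- `vs` is a d-connecting path given the conditioning set `W`: a sequence of edges of the
graph traversed in either direction, passing through no vertex more than once, such that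
every collider on it is in `W` and every non-collider on it is not in `W`. -/
def DConnPath (E : V → V → Prop) (W : Set V) (vs : List V) : Prop :=
  vs ≠ [] ∧ vs.Nodup ∧ vs.Chain' (fun a b => E a b ∨ E b a) ∧
  (∀ v, IsColliderOn E vs v → v ∈ W) ∧
  (∀ v, IsInteriorOn vs v → ¬ IsColliderOn E vs v → v ∉ W)

/-- `vs` d-connects the vertices `a` and `b` given `W`. -/
def DConnPathBetween (E : V → V → Prop) (W : Set V) (vs : List V) (a b : V) : Prop :=
  ∃ h : vs ≠ [], vs.head h = a ∧ vs.getLast h = b ∧ DConnPath E W vs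

/-- `A` and `B` are d-connected given `W`. -/
def DConn (E : V → V → Prop) (A B W : Set V) : Prop :=
  ∃ (vs : List V) (h : vs ≠ []),
    vs.head h ∈ A ∧ vs.getLast h ∈ B ∧ DConnPath E W vs

/-- `A` and `B` are d-separated given `W`. -/
def DSep (E : V → V → Prop) (A B W : Set V) : Prop := ¬ DConn E A B W

/-- In an undirected graph `U`, there is a path between `A` and `B` that avoids `C`
(i.e. an active path given `C`). -/
def UConn (U : V → V → Prop) (A B C : Set V) : Prop :=
  ∃ (vs : List V) (h : vs ≠ []),
    vs.head h ∈ A ∧ vs.getLast h ∈ B ∧ vs.Nodup ∧ vs.Chain' U ∧ ∀ v ∈ vs, v ∉ C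

/-- `A` and `B` are separated given `C` in the undirected graph `U`. -/
def USep (U : V → V → Prop) (A B C : Set V) : Prop := ¬ UConn U A B C

/-- Ancestors of `A`: vertices with a directed path to some member of `A`, together
with `A` itself. -/
def Anc (E : V → V → Prop) (A : Set V) : Set V :=
  {v | v ∈ A ∨ ∃ a ∈ A, Relation.TransGen E v a}

/-- A directed graph is acyclic (a DAG) when it has no directed cycle. -/
def Acyclic (E : V → V → Prop) : Prop := ∀ v, ¬ Relation.TransGen E v v

/-- Subgraph of `E` induced on the vertex set `S`. -/
def Induced (E : V → V → Prop) (S : Set V) : V → V → Prop :=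
  fun a b => E a b ∧ a ∈ S ∧ b ∈ S

/-- The moral graph of a directed graph: marry all spouses (pairs with a common child)
and forget edge directions. -/
def Moral (E : V → V → Prop) : V → V → Prop :=
  fun a b => a ≠ b ∧ (E a b ∨ E b a ∨ ∃ c, E a c ∧ E b c)

end Graphs

/-! Mixtures of DAGs and the mother graph.  Variables are `Option X`, with `none`
playing the role of the auxiliary time variable `T` and `some x` the role of the
substantive variable `x`.  The sub-DAGs are a family `G : K → Option X → Option X → Prop`
indexed by `K`; the mother graph is their disjoint union, with vertex type `Option X × K`. -/

section Mother

variable {X K : Type*}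

/-- Edge relation of the mother graph: the disjoint union of the sub-DAGs `G k`. -/
def MotherEdge (G : K → Option X → Option X → Prop) :
    Option X × K → Option X × K → Prop :=
  fun a b => a.2 = b.2 ∧ G a.2 a.1 b.1

/-- The set `D′` of all vertex copies of the variables in `D`. -/
def Copies (D : Set (Option X)) : Set (Option X × K) := {v | v.1 ∈ D}

/-- The set of variables having some vertex copy among the ancestors (in the mother
graph) of the vertex copies of `D`. -/
def AncVars (G : K → Option X → Option X → Prop) (D : Set (Option X)) : Set (Option X) :=
  {z | ∃ k, (z, k) ∈ Anc (MotherEdge G) (Copies D)}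

/-- `a` and `b` are adjacent in some sub-DAG. -/
def MAdj (G : K → Option X → Option X → Prop) (a b : Option X) : Prop :=
  ∃ k, G k a b ∨ G k b a

/-- The middle variable of the triple `⟨a, b, c⟩` is an m-collider: either
`a → b ← c` in some sub-DAG, or `a → b ← T` in one sub-DAG and `T → b ← c` in another,
where `b` (and, in the second case, `a` and `c`) are substantive variables. -/
def MColliderTriple (G : K → Option X → Option X → Prop) (a b c : Option X) : Prop :=
  b ≠ none ∧
    ((∃ k, G k a b ∧ G k c b) ∨
      (a ≠ none ∧ c ≠ none ∧ ∃ k₁ k₂, k₁ ≠ k₂ ∧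
        G k₁ a b ∧ G k₁ none b ∧ G k₂ none b ∧ G k₂ c b))

/-- Admissible triple of an m-path: either both edges appear (in either orientation)
within a single sub-DAG, or `a → b ← T` in one sub-DAG and `T → b ← c` in another. -/
def MTriple (G : K → Option X → Option X → Prop) (a b c : Option X) : Prop :=
  (∃ k, (G k a b ∨ G k b a) ∧ (G k b c ∨ G k c b)) ∨
    (a ≠ none ∧ b ≠ none ∧ c ≠ none ∧ ∃ k₁ k₂, k₁ ≠ k₂ ∧
      G k₁ a b ∧ G k₁ none b ∧ G k₂ none b ∧ G k₂ c b)

/-- `b` is an m-collider on the m-path `vs`. -/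
def IsMColliderOn (G : K → Option X → Option X → Prop)
    (vs : List (Option X)) (b : Option X) : Prop :=
  ∃ a c, [a, b, c] <:+: vs ∧ MColliderTriple G a b c

/-- The variable sets `D` and `E` are m-d-connected given `F`: there is an m-path between
`D` and `E` such that every m-collider on it is in `F` and every non-m-collider on it is
not in `F`. -/
def MDConn (G : K → Option X → Option X → Prop) (D E F : Set (Option X)) : Prop :=
  ∃ (vs : List (Option X)) (h : vs ≠ []),
    vs.head h ∈ D ∧ vs.getLast h ∈ E ∧ vs.Nodup ∧ vs.Chain' (MAdj G) ∧
    (∀ a b c, [a, b, c] <:+: vs → MTriple G a b c) ∧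
    (∀ b, IsMColliderOn G vs b → b ∈ F) ∧
    (∀ b, IsInteriorOn vs b → ¬ IsMColliderOn G vs b → b ∉ F)

/-- `D` and `E` are m-d-separated given `F`. -/
def MDSep (G : K → Option X → Option X → Prop) (D E F : Set (Option X)) : Prop :=
  ¬ MDConn G D E F

end Mother

/-- The two sub-DAGs of Figure 3(a): variables `some 0 = X_i`, `some 1 = X_j`,
`some 2 = X_k`, `none = T`; sub-DAG `0` has edges `X_i → X_j` and `T → X_j`, and
sub-DAG `1` has edges `X_k → X_j` and `T → X_j`. -/
def GFig3a : Fin 2 → Option (Fin 3) → Option (Fin 3) → Prop := fun k a b =>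
  if k = 0 then (a = some 0 ∧ b = some 1) ∨ (a = none ∧ b = some 1)
  else (a = some 2 ∧ b = some 1) ∨ (a = none ∧ b = some 1)

/-!
A path of the mother graph never leaves the sub-DAG it starts in, so it d-connects `{X_i}′` and
`{X_k}′` only inside one `G_k`, and each sub-DAG isolates one of the two variables. The m-path
`⟨X_i, X_j, X_k⟩`, however, may switch sub-DAGs at `X_j` through `T`, and `X_j` is an m-collider
on it.
-/

section Graphs

variable {V : Type*}

def IsIsolated (E : V → V → Prop) (v : V) : Prop := ∀ u, ¬ (E v u ∨ E u v)

theorem List.IsChain.exists_adj_head_getLast {E : V → V → Prop} {vs : List V}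
    (h : vs.IsChain (fun a b => E a b ∨ E b a)) (hne : vs ≠ [])
    (hends : vs.head hne ≠ vs.getLast hne) :
    (∃ u, E (vs.head hne) u ∨ E u (vs.head hne)) ∧
      ∃ u, E (vs.getLast hne) u ∨ E u (vs.getLast hne) := by
  match vs, h with
  | [_], _ => exact absurd rfl hends
  | x :: y :: l, h =>
    have hdrop : (x :: y :: l).dropLast ≠ [] := by simp
    exact ⟨⟨y, (List.isChain_cons_cons.1 h).1⟩, ⟨_, (h.rel_getLast_dropLast hdrop).symm⟩⟩

theorem List.IsChain.apply_getLast_eq_apply_head {W : Type*} {E : V → V → Prop} {f : V → W}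
    {vs : List V} (hE : E ≤ Function.onFun Eq f) (h : vs.IsChain E) (hne : vs ≠ []) :
    f (vs.getLast hne) = f (vs.head hne) := by
  have := (List.relationReflTransGen_of_exists_isChain vs h hne).lift f hE
  rw [Relation.reflTransGen_eq_self] at this
  exact this.symm

theorem List.eq_of_infix_triple {α : Type*} {a b c x y z : α}
    (h : [x, y, z] <:+: [a, b, c]) : x = a ∧ y = b ∧ z = c := by
  simpa using h.sublist.eq_of_length rfl

end Graphs

section Mother

variable {X K : Type*} {G : K → Option X → Option X → Prop}

theorem motherEdge_symm_le_onFun_snd :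
    (fun a b => MotherEdge G a b ∨ MotherEdge G b a) ≤ Function.onFun Eq Prod.snd := by
  rintro a b (⟨hab, -⟩ | ⟨hba, -⟩)
  exacts [hab, hba.symm]

theorem not_isIsolated_of_motherEdge {v u : Option X × K}
    (h : MotherEdge G v u ∨ MotherEdge G u v) : ¬ IsIsolated (G v.2) v.1 := by
  rcases h with ⟨-, h⟩ | ⟨huv, h⟩
  · exact fun hiso => hiso u.1 (Or.inl h)
  · exact fun hiso => hiso u.1 (Or.inr (huv ▸ h))

theorem dSep_copies_of_isIsolated {D E : Set (Option X)} (W : Set (Option X × K))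
    (hDE : Disjoint D E)
    (hiso : ∀ k, (∀ a ∈ D, IsIsolated (G k) a) ∨ ∀ b ∈ E, IsIsolated (G k) b) :
    DSep (MotherEdge G) (Copies D) (Copies E) W := by
  rintro ⟨vs, hne, hD, hE, -, -, hchain, -, -⟩
  have hends : vs.head hne ≠ vs.getLast hne := fun h =>
    hDE.ne_of_mem hD hE (congrArg Prod.fst h)
  obtain ⟨⟨u, hu⟩, ⟨w, hw⟩⟩ := hchain.exists_adj_head_getLast hne hends
  have hk := hchain.apply_getLast_eq_apply_head motherEdge_symm_le_onFun_snd hne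
  rcases hiso (vs.head hne).2 with hiso | hiso
  · exact not_isIsolated_of_motherEdge hu (hiso _ hD)
  · exact not_isIsolated_of_motherEdge hw (hk ▸ hiso _ hE)

theorem MColliderTriple.mTriple {a b c : Option X} (h : MColliderTriple G a b c) :
    MTriple G a b c := by
  obtain ⟨hb, ⟨k, hab, hcb⟩ | ⟨ha, hc, hswitch⟩⟩ := h
  · exact Or.inl ⟨k, Or.inl hab, Or.inr hcb⟩
  · exact Or.inr ⟨ha, hb, hc, hswitch⟩

theorem MColliderTriple.mAdj_left {a b c : Option X} (h : MColliderTriple G a b c) :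
    MAdj G a b := by
  obtain ⟨-, ⟨k, hab, -⟩ | ⟨-, -, k, -, -, hab, -⟩⟩ := h <;> exact ⟨k, Or.inl hab⟩

theorem MColliderTriple.mAdj_right {a b c : Option X} (h : MColliderTriple G a b c) :
    MAdj G b c := by
  obtain ⟨-, ⟨k, -, hcb⟩ | ⟨-, -, -, k, -, -, -, -, hcb⟩⟩ := h <;> exact ⟨k, Or.inr hcb⟩

theorem mdConn_of_mColliderTriple {D E F : Set (Option X)} {a b c : Option X}
    (h : MColliderTriple G a b c) (hnodup : [a, b, c].Nodup)
    (ha : a ∈ D) (hb : b ∈ F) (hc : c ∈ E) : MDConn G D E F := by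
  refine ⟨[a, b, c], List.cons_ne_nil _ _, ha, hc, hnodup,
    List.isChain_cons_cons.2 ⟨h.mAdj_left, List.isChain_pair.2 h.mAdj_right⟩, ?_, ?_, ?_⟩
  · intro x y z hxyz
    obtain ⟨rfl, rfl, rfl⟩ := List.eq_of_infix_triple hxyz
    exact h.mTriple
  · rintro y ⟨x, z, hxyz, -⟩
    obtain ⟨-, rfl, -⟩ := List.eq_of_infix_triple hxyz
    exact hb
  · rintro y ⟨x, z, hxyz⟩ hnot
    obtain ⟨rfl, rfl, rfl⟩ := List.eq_of_infix_triple hxyz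
    exact absurd ⟨x, z, List.infix_refl _, h⟩ hnot

end Mother

/-- strictness of m-d-separation versus d-separation: in the mother graph
of `GFig3a`, `{X_i}` and `{X_k}` are d-separated given `{X_j}`, but they are NOT
m-d-separated given `{X_j}`; so the converse of "m-d-separation implies d-separation"
fails. -/
theorem mdSep_strictly_stronger_than_dSep :
    DSep (MotherEdge GFig3a)
      (Copies {some 0}) (Copies {some 2}) (Copies {some 1}) ∧
    ¬ MDSep GFig3a {some 0} {some 2} {some 1} := by
  constructor
  · refine dSep_copies_of_isIsolated _ (by simp) fun k => ?_
    fin_cases k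
    · exact Or.inr fun b hb u => by simp_all [GFig3a]
    · exact Or.inl fun a ha u => by simp_all [GFig3a]
  · have hcollider : MColliderTriple GFig3a (some 0) (some 1) (some 2) :=
      ⟨by simp, Or.inr ⟨by simp, by simp, 0, 1, by simp [GFig3a]⟩⟩
    exact fun hsep => hsep (mdConn_of_mColliderTriple hcollider (by decide) rfl rfl rfl)
end

section
/- Counterexample to the global Markov property under plain d-separation: There exist finite types I, J, K, a finite index set 𝒯 partitioned into nonempty 𝒯₁ and 𝒯₂, a probability mass function p on 𝒯, probability mass functions f_I on I and f_K on K, and conditional probability mass functions g(· | x_i, t) on J for each x_i ∈ I, t ∈ 𝒯₁ and h(· | x_k, t) on J for each x_k ∈ K, t ∈ 𝒯₂, such that the mixture density f(x_i, x_j, x_k) := Σ_{t∈𝒯₁} p(t)·f_I(x_i)·g(x_j | x_i, t)·f_K(x_k) + Σ_{t∈𝒯₂} p(t)·f_I(x_i)·h(x_j | x_k, t)·f_K(x_k) CANNOT be written in the form γ(x_i, x_j)·γ′(x_k, x_j) for any non-negative functions γ, γ′; that is, X_i and X_k are conditionally dependent given X_j under f. -/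
/-- counterexample to the global Markov property under plain d-separation:
there exist finite types `I`, `J`, `K`, a finite time index set `T` partitioned into
nonempty `T1` and `T2`, a pmf `p` on `T`, pmfs `fI` on `I` and `fK` on `K`, and
conditional pmfs `g (· | xi, t)` on `J` (for `t ∈ T1`) and `h (· | xk, t)` on `J`
(for `t ∈ T2`) such that the mixture density
`f (xi, xj, xk) = ∑ t ∈ T1, p t * fI xi * g xj xi t * fK xk
               + ∑ t ∈ T2, p t * fI xi * h xj xk t * fK xk`
cannot be written as `γ (xi, xj) * γ' (xk, xj)` for non-negative `γ`, `γ'`; that is,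
`X_i` and `X_k` are conditionally dependent given `X_j` under `f`. -/
theorem counterexample_dSep_global_markov :
    ∃ (I J K T : Type) (instI : Fintype I) (instJ : Fintype J) (instK : Fintype K)
      (instT : Fintype T)
      (T1 T2 : Finset T) (p : T → ℝ) (fI : I → ℝ) (fK : K → ℝ)
      (g : J → I → T → ℝ) (h : J → K → T → ℝ),
      Disjoint T1 T2 ∧ (∀ t, t ∈ T1 ∨ t ∈ T2) ∧ T1.Nonempty ∧ T2.Nonempty ∧
      (∀ t, 0 ≤ p t) ∧ (∑ t ∈ @Finset.univ T instT, p t) = 1 ∧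
      (∀ xi, 0 ≤ fI xi) ∧ (∑ xi ∈ @Finset.univ I instI, fI xi) = 1 ∧
      (∀ xk, 0 ≤ fK xk) ∧ (∑ xk ∈ @Finset.univ K instK, fK xk) = 1 ∧
      (∀ xi t, t ∈ T1 →
        (∀ xj, 0 ≤ g xj xi t) ∧ (∑ xj ∈ @Finset.univ J instJ, g xj xi t) = 1) ∧
      (∀ xk t, t ∈ T2 →
        (∀ xj, 0 ≤ h xj xk t) ∧ (∑ xj ∈ @Finset.univ J instJ, h xj xk t) = 1) ∧
      ¬ ∃ (γ : I → J → ℝ) (γ' : K → J → ℝ),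
          (∀ xi xj, 0 ≤ γ xi xj) ∧ (∀ xk xj, 0 ≤ γ' xk xj) ∧
          ∀ xi xj xk,
            ((∑ t ∈ T1, p t * fI xi * g xj xi t * fK xk) +
              (∑ t ∈ T2, p t * fI xi * h xj xk t * fK xk))
              = γ xi xj * γ' xk xj := by

  refine ⟨Bool, Bool, Bool, Bool, inferInstance, inferInstance, inferInstance, inferInstance,
    {false}, {true}, fun _ => 1/2, fun _ => 1/2, fun _ => 1/2,
    (fun xj xi _ => if xj = xi then 1 else 0),
    (fun xj xk _ => if xj = xk then 1 else 0), ?_, ?_, ?_, ?_, ?_, ?_, ?_, ?_, ?_, ?_, ?_, ?_, ?_⟩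
  · simp
  · intro t; cases t <;> simp
  · exact ⟨false, by simp⟩
  · exact ⟨true, by simp⟩
  · intro t; norm_num
  · simp [Fintype.sum_bool]
  · intro xi; norm_num
  · simp [Fintype.sum_bool]
  · intro xk; norm_num
  · simp [Fintype.sum_bool]
  · intro xi t _
    constructor
    · intro xj; positivity
    · cases xi <;> simp [Fintype.sum_bool]
  · intro xk t _
    constructor
    · intro xj; positivity
    · cases xk <;> simp [Fintype.sum_bool]
  · rintro ⟨γ, γ', hγ, hγ', heq⟩
    have e1 := heq true true true
    have e2 := heq true true false
    have e3 := heq false true true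
    have e4 := heq false true false
    simp only [Finset.sum_singleton] at e1 e2 e3 e4
    norm_num at e1 e2 e3 e4
    rcases e4 with h4 | h4
    · rw [h4] at e3; norm_num at e3
    · rw [h4] at e2; norm_num at e2
end
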